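/- Let k ≥ 1 and n ≥ 2k+1, and let Σ_k be the set of k-sparse vectors of ℝⁿ. Then the ℓ¹-norm is the unique maximizer of A_Σ^{RIP,nec} over the class of weighted ℓ¹-norms: for every weight vector w ∈ ℝⁿ with w_i > 0 for all i, max_i w_i = 1, and w ≠ (1,…,1), one has A_Σ^{RIP,nec}(‖·‖_w) < A_Σ^{RIP,nec}(‖·‖₁); equivalently B_Σ(‖·‖_w) > B_Σ(‖·‖₁). -/

import Mathlib

open scoped BigOperators ENNReal RealInnerProductSpace
open MeasureTheory Metric

noncomputable section

/-- The set of `k`-sparse vectors of `ℝⁿ`. -/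
def sparseVecs (n k : ℕ) : Set (EuclideanSpace ℝ (Fin n)) :=
  {x | ∃ s : Finset (Fin n), s.card ≤ k ∧ ∀ i ∉ s, x i = 0}

/-- Descent set (collection of descent vectors) of `R` at `x`. -/
def descentCone {n : ℕ} (R : EuclideanSpace ℝ (Fin n) → ℝ) (x : EuclideanSpace ℝ (Fin n)) :
    Set (EuclideanSpace ℝ (Fin n)) := {z | R (x + z) ≤ R x}

/-- Descent vectors of `R` at the model set `S`. -/
def descentConeSet {n : ℕ} (R : EuclideanSpace ℝ (Fin n) → ℝ)
    (S : Set (EuclideanSpace ℝ (Fin n))) : Set (EuclideanSpace ℝ (Fin n)) :=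
  ⋃ x ∈ S, descentCone R x

/-- Weighted ℓ¹-norm `‖z‖_w = ∑ i, w i * |z i|`. -/
def wNorm {n : ℕ} (w : Fin n → ℝ) (z : EuclideanSpace ℝ (Fin n)) : ℝ := ∑ i, w i * |z i|

/-- Restriction of a vector to a set of coordinates (`z_S`). -/
def coordRestrict {n : ℕ} (z : EuclideanSpace ℝ (Fin n)) (S : Finset (Fin n)) :
    EuclideanSpace ℝ (Fin n) := WithLp.toLp 2 (fun i => if i ∈ S then z i else 0)

/-- Restricted conditioning `γ(M)` of a map `M` on the secant set `Σ_{2k}`, valued in `[0,∞]`. -/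
def gammaRC (n k : ℕ) (M : EuclideanSpace ℝ (Fin n) → EuclideanSpace ℝ (Fin n)) : ℝ≥0∞ :=
  (⨆ x ∈ {x : EuclideanSpace ℝ (Fin n) | x ∈ sparseVecs n (2 * k) ∧ ‖x‖ = 1},
      ENNReal.ofReal (‖M x‖ ^ 2)) /
  (⨅ x ∈ {x : EuclideanSpace ℝ (Fin n) | x ∈ sparseVecs n (2 * k) ∧ ‖x‖ = 1},
      ENNReal.ofReal (‖M x‖ ^ 2))

/-- `A_Σ^{RIP,nec}(R)`. -/
def Anec (n k : ℕ) (R : EuclideanSpace ℝ (Fin n) → ℝ) : ℝ≥0∞ :=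
  ⨅ z ∈ descentConeSet R (sparseVecs n k) \ {0},
    gammaRC n k (fun x =>
      x - (Submodule.orthogonalProjection (Submodule.span ℝ {z}) x : EuclideanSpace ℝ (Fin n)))

/-- `B_Σ(R)`, where `T₂` selects, for each `z`, a set of `2k` indices carrying `2k` largest
absolute values of coordinates of `z`. -/
def Bsigma (n k : ℕ) (T₂ : EuclideanSpace ℝ (Fin n) → Finset (Fin n))
    (R : EuclideanSpace ℝ (Fin n) → ℝ) : ℝ :=
  sSup {r : ℝ | ∃ z ∈ descentConeSet R (sparseVecs n k) \ {0},
    r = ‖coordRestrict z (T₂ z)ᶜ‖ ^ 2 / ‖coordRestrict z (T₂ z)‖ ^ 2}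

/-!
For `z ≠ 0` the residual `I - Π_z` has restricted conditioning `1 + 1 / ρ(z)` on `Σ_{2k}`, where
`ρ(z) = ‖z_{T₂ᶜ}‖₂² / ‖z_{T₂}‖₂²`: the largest value `1` of `‖x - Π_z x‖²` is attained at a
`2`-sparse unit vector orthogonal to `z`, the smallest, `1 - ‖z_{T₂}‖²/‖z‖²`, at the normalised
`z_{T₂}`. Hence both `A_Σ^{RIP,nec}` and `B_Σ` are governed by the supremum of `ρ` over the descent
directions, which are the `z` with `‖z_{Tᶜ}‖_w ≤ ‖z_T‖_w` for some `|T| ≤ k`.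

For the ℓ¹-norm this supremum is attained, by compactness. Given a maximiser `z`, permute the
coordinates so that the `k` largest weights of `w` sit on the `k` largest entries of `|z|`.
As `max w = 1` and `w ≠ 1`, the ℓ¹ descent inequality of `z` becomes strict for `‖·‖_w`, so `|z|`
can be moved a little while staying a `w`-descent direction. Raising an entry outside the top `2k`
that is below the smallest top entry, or lowering a top entry above the common value of the
others, strictly increases `ρ`; one of the two is possible because `|z|` is not constant, as
`n > 2k`.
-/

open Finset

section TopSets

variable {ι : Type*}

def IsTopSet (g : ι → ℝ) (S : Finset ι) : Prop := ∀ i ∈ S, ∀ j ∉ S, g j ≤ g i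

theorem exists_isTopSet_card_eq [Fintype ι] (g : ι → ℝ) {m : ℕ} (hm : m ≤ Fintype.card ι) :
    ∃ S : Finset ι, S.card = m ∧ IsTopSet g S := by
  classical
  obtain ⟨S, hS, hmax⟩ := exists_max_image (powersetCard m univ) (fun S => ∑ i ∈ S, g i)
    (powersetCard_nonempty.mpr (by simpa using hm))
  refine ⟨S, (mem_powersetCard.mp hS).2, fun i hi j hj => ?_⟩
  by_contra! hij
  -- exchanging `i` for `j` would increase the sum
  have hswap := hmax (insert j (S.erase i))
    (mem_powersetCard.mpr ⟨subset_univ _, by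
      rw [card_insert_of_notMem (fun h => hj (mem_of_mem_erase h)), card_erase_of_mem hi,
        (mem_powersetCard.mp hS).2]
      have : 0 < m := (mem_powersetCard.mp hS).2 ▸ card_pos.mpr ⟨i, hi⟩
      omega⟩)
  rw [sum_insert (fun h => hj (mem_of_mem_erase h)), ← add_sum_erase S g hi] at hswap
  linarith

theorem IsTopSet.sum_le_sum [DecidableEq ι] {g : ι → ℝ} (hg : ∀ i, 0 ≤ g i) {S T : Finset ι}
    (hT : IsTopSet g T) (hcard : S.card ≤ T.card) : ∑ i ∈ S, g i ≤ ∑ i ∈ T, g i := by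
  have hcard' : (S \ T).card ≤ (T \ S).card := by
    have := card_sdiff_add_card_inter S T
    have := card_sdiff_add_card_inter T S
    rw [inter_comm T S] at this
    omega
  rw [← sum_inter_add_sum_sdiff S T, ← sum_inter_add_sum_sdiff T S, inter_comm]
  gcongr _ + ?_
  rcases (S \ T).eq_empty_or_nonempty with hST | hST
  · simpa [hST] using sum_nonneg fun i _ => hg i
  obtain ⟨j, hj, hmin⟩ := exists_min_image (T \ S) g
    (card_pos.mp (hcard'.trans_lt' (card_pos.mpr hST)))
  calc ∑ i ∈ S \ T, g i ≤ (S \ T).card • g j :=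
        sum_le_card_nsmul _ _ _ fun i hi => hT j (mem_sdiff.mp hj).1 i (mem_sdiff.mp hi).2
    _ ≤ (T \ S).card • g j := nsmul_le_nsmul_left (hg j) hcard'
    _ ≤ ∑ i ∈ T \ S, g i := card_nsmul_le_sum _ _ _ hmin

end TopSets

section TopSqSum

variable {ι : Type*} [Fintype ι]

/-- `topSqSum (2 * k) z = ‖z_{T₂}‖₂²` for every admissible choice of `T₂`
(`IsTopSet.topSqSum_eq`). -/
def topSqSum (m : ℕ) (x : ι → ℝ) : ℝ :=
  ({S | S.card ≤ m} : Finset (Finset ι)).sup' ⟨∅, by simp⟩ fun S => ∑ i ∈ S, x i ^ 2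

theorem sum_sq_le_topSqSum {m : ℕ} (x : ι → ℝ) {S : Finset ι} (hS : S.card ≤ m) :
    ∑ i ∈ S, x i ^ 2 ≤ topSqSum m x :=
  le_sup' (fun S : Finset ι => ∑ i ∈ S, x i ^ 2) (by simpa using hS)

theorem exists_topSqSum_eq (m : ℕ) (x : ι → ℝ) :
    ∃ S : Finset ι, S.card ≤ m ∧ topSqSum m x = ∑ i ∈ S, x i ^ 2 := by
  obtain ⟨S, hS, h⟩ := exists_mem_eq_sup' (⟨∅, by simp⟩ : ({S | S.card ≤ m} : Finset _).Nonempty)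
    fun S : Finset ι => ∑ i ∈ S, x i ^ 2
  exact ⟨S, by simpa using hS, h⟩

theorem topSqSum_nonneg (m : ℕ) (x : ι → ℝ) : 0 ≤ topSqSum m x :=
  (sum_nonneg fun _ _ => sq_nonneg _).trans (sum_sq_le_topSqSum x (S := ∅) (by simp))

theorem topSqSum_le_sum_sq (m : ℕ) (x : ι → ℝ) : topSqSum m x ≤ ∑ i, x i ^ 2 := by
  obtain ⟨S, -, h⟩ := exists_topSqSum_eq m x
  exact h ▸ sum_le_sum_of_subset_of_nonneg (subset_univ S) fun _ _ _ => sq_nonneg _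

theorem topSqSum_pos {m : ℕ} (hm : 1 ≤ m) {x : ι → ℝ} (hx : x ≠ 0) : 0 < topSqSum m x := by
  obtain ⟨i, hi⟩ : ∃ i, x i ≠ 0 := Function.ne_iff.mp hx
  calc 0 < ∑ j ∈ {i}, x j ^ 2 := by rw [sum_singleton]; positivity
    _ ≤ topSqSum m x := sum_sq_le_topSqSum x (by simpa using hm)

theorem topSqSum_smul (m : ℕ) (c : ℝ) (x : ι → ℝ) :
    topSqSum m (c • x) = c ^ 2 * topSqSum m x := by
  simp only [topSqSum, Pi.smul_apply, smul_eq_mul, mul_pow, ← mul_sum]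
  exact (mul₀_sup' (sq_nonneg c) _ _ _).symm

theorem topSqSum_comp_perm (m : ℕ) (x : ι → ℝ) (σ : Equiv.Perm ι) :
    topSqSum m (x ∘ σ) = topSqSum m x := by
  have key : ∀ (y : ι → ℝ) (τ : Equiv.Perm ι), topSqSum m (y ∘ τ) ≤ topSqSum m y := by
    intro y τ
    obtain ⟨S, hS, h⟩ := exists_topSqSum_eq m (y ∘ τ)
    rw [h]
    simpa only [sum_map, Equiv.coe_toEmbedding, Function.comp_apply] using
      sum_sq_le_topSqSum y (S := S.map τ.toEmbedding) (by simpa using hS)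
  refine le_antisymm (key x σ) ?_
  simpa [Function.comp_assoc] using key (x ∘ σ) σ.symm

theorem IsTopSet.topSqSum_eq [DecidableEq ι] {m : ℕ} {x : ι → ℝ} {S : Finset ι}
    (hS : IsTopSet (|x ·|) S) (hcard : S.card = m) : topSqSum m x = ∑ i ∈ S, x i ^ 2 := by
  obtain ⟨S', hS', h⟩ := exists_topSqSum_eq m x
  refine le_antisymm (h ▸ IsTopSet.sum_le_sum (fun i => sq_nonneg (x i)) ?_ (hcard ▸ hS'))
    (sum_sq_le_topSqSum x hcard.le)
  exact fun i hi j hj => sq_le_sq.mpr (by simpa using hS i hi j hj)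

end TopSqSum

section TailRatio

variable {ι : Type*} [Fintype ι]

/-- `tailRatio (2 * k) z` is `‖z_{T₂ᶜ}‖₂² / ‖z_{T₂}‖₂²`, the ratio whose supremum is `B_Σ`. -/
def tailRatio (m : ℕ) (x : ι → ℝ) : ℝ := (∑ i, x i ^ 2 - topSqSum m x) / topSqSum m x

theorem tailRatio_nonneg (m : ℕ) (x : ι → ℝ) : 0 ≤ tailRatio m x :=
  div_nonneg (sub_nonneg.mpr (topSqSum_le_sum_sq m x)) (topSqSum_nonneg m x)

theorem tailRatio_smul (m : ℕ) {c : ℝ} (hc : c ≠ 0) (x : ι → ℝ) :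
    tailRatio m (c • x) = tailRatio m x := by
  simp only [tailRatio, topSqSum_smul, Pi.smul_apply, smul_eq_mul, mul_pow, ← mul_sum, ← mul_sub]
  exact mul_div_mul_left _ _ (pow_ne_zero 2 hc)

theorem tailRatio_abs (m : ℕ) (x : ι → ℝ) : tailRatio m (|x ·|) = tailRatio m x := by
  simp only [tailRatio, topSqSum, sq_abs]

theorem tailRatio_comp_perm (m : ℕ) (x : ι → ℝ) (σ : Equiv.Perm ι) :
    tailRatio m (x ∘ σ) = tailRatio m x := by
  simp only [tailRatio, topSqSum_comp_perm, Function.comp_apply,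
    Equiv.sum_comp σ fun i => x i ^ 2]

theorem tailRatio_zero (m : ℕ) : tailRatio m (0 : ι → ℝ) = 0 := by
  have : topSqSum m (0 : ι → ℝ) = 0 :=
    le_antisymm (by simpa using topSqSum_le_sum_sq m (0 : ι → ℝ)) (topSqSum_nonneg m 0)
  simp [tailRatio, this]

theorem topSqSum_pos_of_tailRatio_pos {m : ℕ} {x : ι → ℝ} (h : 0 < tailRatio m x) :
    0 < topSqSum m x :=
  (topSqSum_nonneg m x).lt_of_ne fun h0 => by simp [tailRatio, ← h0] at h

theorem ne_zero_of_tailRatio_pos {m : ℕ} {x : ι → ℝ} (h : 0 < tailRatio m x) : x ≠ 0 := by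
  rintro rfl
  simp [tailRatio_zero] at h

theorem exists_ne_zero_notMem_of_tailRatio_pos [DecidableEq ι] {m : ℕ} {x : ι → ℝ}
    (h : 0 < tailRatio m x) {T : Finset ι} (hT : T.card ≤ m) : ∃ j ∉ T, x j ≠ 0 := by
  by_contra! hzero
  have : ∑ i, x i ^ 2 ≤ topSqSum m x := by
    rw [← sum_compl_add_sum T, sum_eq_zero fun j hj => by simp [hzero j (mem_compl.mp hj)],
      zero_add]
    exact sum_sq_le_topSqSum x hT
  exact (div_nonpos_of_nonpos_of_nonneg (by linarith) (topSqSum_nonneg m x)).not_gt h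

theorem IsTopSet.tailRatio_eq [DecidableEq ι] {m : ℕ} {x : ι → ℝ} {S : Finset ι}
    (hS : IsTopSet (|x ·|) S) (hcard : S.card = m) :
    tailRatio m x = (∑ i ∈ Sᶜ, x i ^ 2) / ∑ i ∈ S, x i ^ 2 := by
  rw [tailRatio, hS.topSqSum_eq hcard, ← sum_compl_add_sum S, add_sub_cancel_right]

theorem tailRatio_pos_of_forall_ne_zero {m : ℕ} (hm : 1 ≤ m) (hmι : m < Fintype.card ι)
    {x : ι → ℝ} (hx : ∀ i, x i ≠ 0) : 0 < tailRatio m x := by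
  classical
  obtain ⟨S, hS, htop⟩ := exists_topSqSum_eq m x
  have hSc : Sᶜ.Nonempty := card_pos.mp (by rw [card_compl]; omega)
  refine div_pos ?_ (topSqSum_pos hm fun h0 => hx hSc.choose (by simp [h0]))
  rw [htop, ← sum_compl_add_sum S, add_sub_cancel_right]
  exact sum_pos (fun i _ => by have := hx i; positivity) hSc

theorem exists_smul_sum_sq_eq_one {x : ι → ℝ} (hx : x ≠ 0) :
    ∃ c : ℝ, c ≠ 0 ∧ ∑ i, (c • x) i ^ 2 = 1 := by
  obtain ⟨i, hi⟩ : ∃ i, x i ≠ 0 := Function.ne_iff.mp hx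
  have hs : 0 < ∑ i, x i ^ 2 :=
    lt_of_lt_of_le (by positivity) (single_le_sum (fun j _ => sq_nonneg (x j)) (mem_univ i))
  refine ⟨(√(∑ i, x i ^ 2))⁻¹, by positivity, ?_⟩
  simp only [Pi.smul_apply, smul_eq_mul, mul_pow, ← mul_sum, inv_pow, Real.sq_sqrt hs.le]
  exact inv_mul_cancel₀ hs.ne'

end TailRatio

section Perturbation

variable {ι : Type*} [Fintype ι] [DecidableEq ι]

open Function

theorem sum_abs_update_sub (x : ι → ℝ) (j : ι) (v : ℝ) :
    ∑ i, |update x j v i - x i| = |v - x j| := by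
  rw [sum_eq_single j (fun i _ hi => by simp [hi]) (by simp)]
  simp

theorem tailRatio_lt_update_of_notMem {m : ℕ} {x : ι → ℝ} (hx : ∀ i, 0 ≤ x i) {S : Finset ι}
    (hS : IsTopSet x S) (hcard : S.card = m) (hpos : 0 < ∑ i ∈ S, x i ^ 2) {j : ι} (hj : j ∉ S)
    {v : ℝ} (hjv : x j < v) (hvS : ∀ i ∈ S, v ≤ x i) :
    tailRatio m x < tailRatio m (update x j v) := by
  have hS' : IsTopSet (|update x j v ·|) S := by
    intro i hi l hl
    dsimp only
    rw [update_of_ne (ne_of_mem_of_not_mem hi hj), abs_of_nonneg (hx i)]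
    rcases eq_or_ne l j with rfl | hlj
    · simpa [abs_of_pos ((hx l).trans_lt hjv)] using hvS i hi
    · simpa [hlj, abs_of_nonneg (hx l)] using hS i hi l hl
  have hS_abs : IsTopSet (|x ·|) S := by simpa only [abs_of_nonneg (hx _)] using hS
  have hsum : ∑ i ∈ S, update x j v i ^ 2 = ∑ i ∈ S, x i ^ 2 :=
    sum_congr rfl fun i hi => by rw [update_of_ne (ne_of_mem_of_not_mem hi hj)]
  rw [hS_abs.tailRatio_eq hcard, hS'.tailRatio_eq hcard, hsum]
  refine div_lt_div_of_pos_right ?_ hpos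
  refine sum_lt_sum (fun i _ => ?_) ⟨j, mem_compl.mpr hj, ?_⟩
  · rcases eq_or_ne i j with rfl | hij
    · simpa using pow_le_pow_left₀ (hx i) hjv.le 2
    · simp [hij]
  · simpa using pow_lt_pow_left₀ hjv (hx j) two_ne_zero

theorem tailRatio_lt_update_of_mem {m : ℕ} {x : ι → ℝ} (hx : ∀ i, 0 ≤ x i) {S : Finset ι}
    (hS : IsTopSet x S) (hcard : S.card = m) (hpos : 0 < ∑ i ∈ Sᶜ, x i ^ 2) {i : ι} (hi : i ∈ S)
    {v : ℝ} (hv : 0 < v) (hvi : v < x i) (hvS : ∀ l ∉ S, x l ≤ v) :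
    tailRatio m x < tailRatio m (update x i v) := by
  have hS' : IsTopSet (|update x i v ·|) S := by
    intro a ha l hl
    dsimp only
    rw [update_of_ne (ne_of_mem_of_not_mem hi hl).symm, abs_of_nonneg (hx l)]
    rcases eq_or_ne a i with rfl | hai
    · simpa [abs_of_pos hv] using hvS l hl
    · simpa [hai, abs_of_nonneg (hx a)] using hS a ha l hl
  have hS_abs : IsTopSet (|x ·|) S := by simpa only [abs_of_nonneg (hx _)] using hS
  have hsum : ∑ l ∈ Sᶜ, update x i v l ^ 2 = ∑ l ∈ Sᶜ, x l ^ 2 :=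
    sum_congr rfl fun l hl => by rw [update_of_ne (ne_of_mem_of_not_mem hi (mem_compl.mp hl)).symm]
  rw [hS_abs.tailRatio_eq hcard, hS'.tailRatio_eq hcard, hsum]
  refine div_lt_div_of_pos_left hpos ?_ ?_
  · exact lt_of_lt_of_le (by simpa using pow_pos hv 2)
      (single_le_sum (f := fun l => update x i v l ^ 2) (fun _ _ => sq_nonneg _) hi)
  refine sum_lt_sum (fun a _ => ?_) ⟨i, hi, ?_⟩
  · rcases eq_or_ne a i with rfl | hai
    · simpa using pow_le_pow_left₀ hv.le hvi.le 2
    · simp [hai]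
  · simpa using pow_lt_pow_left₀ hvi hv.le two_ne_zero

theorem exists_sum_abs_sub_le_tailRatio_lt {m : ℕ} {x : ι → ℝ} (hx : ∀ i, 0 ≤ x i)
    (hρ : 0 < tailRatio m x) (hne : ∃ i j, x i ≠ x j) {ε : ℝ} (hε : 0 < ε) :
    ∃ x' : ι → ℝ, ∑ i, |x' i - x i| ≤ ε ∧ tailRatio m x < tailRatio m x' := by
  have hmι : m ≤ Fintype.card ι := by
    by_contra! h
    obtain ⟨j, hj, -⟩ := exists_ne_zero_notMem_of_tailRatio_pos hρ (T := univ) (by simpa using h.le)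
    exact hj (mem_univ j)
  obtain ⟨S, hcard, hS⟩ := exists_isTopSet_card_eq x hmι
  have hS_abs : IsTopSet (|x ·|) S := by simpa only [abs_of_nonneg (hx _)] using hS
  have hD : 0 < ∑ i ∈ S, x i ^ 2 := hS_abs.topSqSum_eq hcard ▸ topSqSum_pos_of_tailRatio_pos hρ
  have hN : 0 < ∑ i ∈ Sᶜ, x i ^ 2 :=
    (div_pos_iff_of_pos_right hD).mp (hS_abs.tailRatio_eq hcard ▸ hρ)
  obtain ⟨i₀, hi₀, hamin⟩ := exists_min_image S x (nonempty_of_sum_ne_zero hD.ne')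
  set a := x i₀
  by_cases hsmall : ∃ j ∉ S, x j < a
  · obtain ⟨j, hj, hja⟩ := hsmall
    have ht : 0 < min ε (a - x j) := lt_min hε (sub_pos.mpr hja)
    refine ⟨update x j (x j + min ε (a - x j)), ?_,
      tailRatio_lt_update_of_notMem hx hS hcard hD hj (by linarith) fun i hi => ?_⟩
    · rw [sum_abs_update_sub, add_sub_cancel_left, abs_of_pos ht]
      exact min_le_left _ _
    · linarith [hamin i hi, min_le_right ε (a - x j)]
  · have hout : ∀ l ∉ S, x l = a := fun l hl =>
      le_antisymm (hS i₀ hi₀ l hl) (not_lt.mp fun h => hsmall ⟨l, hl, h⟩)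
    obtain ⟨i, hai⟩ : ∃ i, a < x i := by
      by_contra! hle
      have hall : ∀ l, x l = a := fun l =>
        if hl : l ∈ S then le_antisymm (hle l) (hamin l hl) else hout l hl
      obtain ⟨i, j, hij⟩ := hne
      exact hij (by rw [hall i, hall j])
    have hi : i ∈ S := by
      by_contra hi
      linarith [hout i hi]
    have ha : 0 < a := by
      obtain ⟨l, hl, hl0⟩ := exists_ne_zero_notMem_of_tailRatio_pos hρ hcard.le
      exact hout l hl ▸ (hx l).lt_of_ne' hl0
    have ht : 0 < min ε (x i - a) := lt_min hε (sub_pos.mpr hai)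
    refine ⟨update x i (x i - min ε (x i - a)), ?_,
      tailRatio_lt_update_of_mem hx hS hcard hN hi ?_ (by linarith) fun l hl => ?_⟩
    · rw [sum_abs_update_sub, sub_sub_cancel_left, abs_neg, abs_of_pos ht]
      exact min_le_left _ _
    · linarith [min_le_right ε (x i - a)]
    · linarith [hout l hl, min_le_right ε (x i - a)]

end Perturbation

section DescentDir

variable {ι : Type*} [Fintype ι] [DecidableEq ι]

/-- The condition `‖x_{Tᶜ}‖_w ≤ ‖x_T‖_w` for some `|T| ≤ k`; it characterises the descent set
`T_{‖·‖_w}(Σ_k)` (`mem_descentConeSet_wNorm_iff`). -/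
def IsDescentDir (k : ℕ) (w x : ι → ℝ) : Prop :=
  ∃ T : Finset ι, T.card ≤ k ∧ ∑ i ∈ Tᶜ, w i * |x i| ≤ ∑ i ∈ T, w i * |x i|

variable {k : ℕ} {w x : ι → ℝ}

theorem IsDescentDir.smul (h : IsDescentDir k w x) (c : ℝ) : IsDescentDir k w (c • x) := by
  obtain ⟨T, hT, hsum⟩ := h
  refine ⟨T, hT, ?_⟩
  simp only [Pi.smul_apply, smul_eq_mul, abs_mul, mul_left_comm (w _), ← mul_sum]
  exact mul_le_mul_of_nonneg_left hsum (abs_nonneg c)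

theorem IsDescentDir.abs (h : IsDescentDir k w x) : IsDescentDir k w (|x ·|) := by
  simpa only [IsDescentDir, abs_abs] using h

theorem IsDescentDir.comp_perm {σ : Equiv.Perm ι} (h : IsDescentDir k (w ∘ σ) x) :
    IsDescentDir k w (x ∘ σ.symm) := by
  obtain ⟨T, hT, hsum⟩ := h
  refine ⟨T.map σ.toEmbedding, by simpa using hT, ?_⟩
  calc ∑ j ∈ (T.map σ.toEmbedding)ᶜ, w j * |(x ∘ σ.symm) j|
      = ∑ i ∈ Tᶜ, (w ∘ σ) i * |x i| := (sum_equiv σ (by simp) (by simp)).symm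
    _ ≤ ∑ i ∈ T, (w ∘ σ) i * |x i| := hsum
    _ = ∑ j ∈ T.map σ.toEmbedding, w j * |(x ∘ σ.symm) j| := sum_equiv σ (by simp) (by simp)

theorem isClosed_setOf_isDescentDir (k : ℕ) (w : ι → ℝ) :
    IsClosed {x : ι → ℝ | IsDescentDir k w x} := by
  have : {x : ι → ℝ | IsDescentDir k w x} = ⋃ T ∈ {T : Finset ι | T.card ≤ k},
      {x | ∑ i ∈ Tᶜ, w i * |x i| ≤ ∑ i ∈ T, w i * |x i|} := by
    ext x
    simp [IsDescentDir]
  rw [this]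
  exact (Set.toFinite _).isClosed_biUnion fun T _ => isClosed_le (by fun_prop) (by fun_prop)

theorem IsDescentDir.sum_compl_le_of_isTopSet (h : IsDescentDir k (fun _ => 1) x)
    {T : Finset ι} (hT : IsTopSet (|x ·|) T) (hk : k ≤ T.card) :
    ∑ i ∈ Tᶜ, |x i| ≤ ∑ i ∈ T, |x i| := by
  obtain ⟨T₀, hT₀, hsum⟩ := h
  simp only [one_mul] at hsum
  have hle := hT.sum_le_sum (fun i => abs_nonneg (x i)) (hT₀.trans hk)
  have h₀ := sum_compl_add_sum T₀ (|x ·|)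
  have h₁ := sum_compl_add_sum T (|x ·|)
  linarith

theorem IsDescentDir.exists_abs_ne (h : IsDescentDir k (fun _ => 1) x) (hx : x ≠ 0)
    (hk : 2 * k < Fintype.card ι) : ∃ i j, |x i| ≠ |x j| := by
  by_contra! hall
  obtain ⟨i₀, hi₀⟩ : ∃ i, x i ≠ 0 := Function.ne_iff.mp hx
  obtain ⟨T, hT, hsum⟩ := h
  simp only [one_mul, fun i => hall i i₀, sum_const, nsmul_eq_mul, card_compl] at hsum
  have : ((Fintype.card ι - T.card : ℕ) : ℝ) ≤ T.card :=
    le_of_mul_le_mul_right hsum (abs_pos.mpr hi₀)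
  have : Fintype.card ι - T.card ≤ T.card := by exact_mod_cast this
  omega

theorem isDescentDir_of_sum_abs_sub_le {u x' : ι → ℝ} (hu₀ : ∀ i, 0 ≤ u i) (hu₁ : ∀ i, u i ≤ 1)
    {T : Finset ι} (hT : T.card ≤ k) {δ : ℝ}
    (hslack : ∑ i ∈ Tᶜ, u i * |x i| + δ ≤ ∑ i ∈ T, u i * |x i|)
    (hx' : ∑ i, |x' i - x i| ≤ δ) : IsDescentDir k u x' := by
  have hpt : ∀ i, u i * |x' i| ≤ u i * |x i| + |x' i - x i| ∧
      u i * |x i| ≤ u i * |x' i| + |x' i - x i| := fun i => by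
    have h₁ := abs_sub_abs_le_abs_sub (x' i) (x i)
    have h₂ := abs_sub_abs_le_abs_sub (x i) (x' i)
    rw [abs_sub_comm] at h₂
    have h₃ : u i * |x' i - x i| ≤ |x' i - x i| := mul_le_of_le_one_left (abs_nonneg _) (hu₁ i)
    constructor <;> nlinarith [hu₀ i]
  have hc : ∑ i ∈ Tᶜ, u i * |x' i| ≤ ∑ i ∈ Tᶜ, (u i * |x i| + |x' i - x i|) :=
    sum_le_sum fun i _ => (hpt i).1
  have hT' : ∑ i ∈ T, (u i * |x i| - |x' i - x i|) ≤ ∑ i ∈ T, u i * |x' i| :=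
    sum_le_sum fun i _ => by linarith [(hpt i).2]
  rw [sum_add_distrib] at hc
  rw [sum_sub_distrib] at hT'
  have := sum_compl_add_sum T fun i => |x' i - x i|
  exact ⟨T, hT, by linarith⟩

theorem sum_compl_lt_sum_of_threshold {u : ι → ℝ} {T : Finset ι} {c : ℝ} (hc : 0 ≤ c)
    (hT : ∀ i ∈ T, c ≤ u i) (hTc : ∀ i ∉ T, u i ≤ c) (hx : ∑ i ∈ Tᶜ, |x i| ≤ ∑ i ∈ T, |x i|)
    (hne : ∃ i, x i ≠ 0 ∧ u i ≠ c) : ∑ i ∈ Tᶜ, u i * |x i| < ∑ i ∈ T, u i * |x i| := by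
  obtain ⟨i, hxi, hui⟩ := hne
  have hxi' : 0 < |x i| := abs_pos.mpr hxi
  have hmid : ∑ i ∈ Tᶜ, c * |x i| ≤ ∑ i ∈ T, c * |x i| := by
    simpa only [← mul_sum] using mul_le_mul_of_nonneg_left hx hc
  have hlow : ∀ l ∈ Tᶜ, u l * |x l| ≤ c * |x l| := fun l hl =>
    mul_le_mul_of_nonneg_right (hTc l (mem_compl.mp hl)) (abs_nonneg _)
  have hhigh : ∀ l ∈ T, c * |x l| ≤ u l * |x l| := fun l hl =>
    mul_le_mul_of_nonneg_right (hT l hl) (abs_nonneg _)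
  by_cases hi : i ∈ T
  · have := sum_lt_sum hhigh ⟨i, hi, mul_lt_mul_of_pos_right ((hT i hi).lt_of_ne' hui) hxi'⟩
    linarith [sum_le_sum hlow]
  · have := sum_lt_sum hlow
      ⟨i, mem_compl.mpr hi, mul_lt_mul_of_pos_right ((hTc i hi).lt_of_ne hui) hxi'⟩
    linarith [sum_le_sum hhigh]

end DescentDir

section Extremal

variable {ι : Type*} [Fintype ι] [DecidableEq ι] {k m : ℕ}

theorem exists_isDescentDir_tailRatio_pos (hk : 1 ≤ k) (hm : 1 ≤ m)
    (hmι : m < Fintype.card ι) :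
    ∃ x : ι → ℝ, IsDescentDir k (fun _ => 1) x ∧ 0 < tailRatio m x := by
  obtain ⟨i₀⟩ : Nonempty ι := Fintype.card_pos_iff.mp (by omega)
  refine ⟨Function.update (fun _ => 1) i₀ (Fintype.card ι), ⟨{i₀}, by simpa using hk, ?_⟩,
    tailRatio_pos_of_forall_ne_zero hm hmι fun i => ?_⟩
  · rw [sum_congr rfl fun i hi => by rw [Function.update_of_ne (by simpa using hi)]]
    simp [card_compl]
  · rcases eq_or_ne i i₀ with rfl | hi
    · simpa using (by omega : Fintype.card ι ≠ 0)
    · simp [hi]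

theorem exists_isMaxOn_tailRatio {w : ι → ℝ} (hm : 1 ≤ m)
    (hne : ∃ x, IsDescentDir k w x ∧ x ≠ 0) :
    ∃ x₀, IsDescentDir k w x₀ ∧ IsMaxOn (tailRatio m) {x | IsDescentDir k w x} x₀ := by
  set K := {x | IsDescentDir k w x} ∩ {x : ι → ℝ | ∑ i, x i ^ 2 = 1}
  have hK : IsCompact K := by
    refine (isCompact_closedBall (0 : ι → ℝ) 1).of_isClosed_subset
      ((isClosed_setOf_isDescentDir k w).inter (isClosed_eq (by fun_prop) continuous_const))
      fun x hx => ?_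
    rw [mem_closedBall_zero_iff, pi_norm_le_iff_of_nonneg zero_le_one]
    intro i
    rw [Real.norm_eq_abs, ← sq_le_one_iff_abs_le_one, ← hx.2]
    exact single_le_sum (f := fun i => x i ^ 2) (fun _ _ => sq_nonneg _) (mem_univ i)
  have hcont : Continuous (topSqSum m : (ι → ℝ) → ℝ) :=
    Continuous.finset_sup'_apply _ fun S _ => by fun_prop
  obtain ⟨x, hx, hx0⟩ := hne
  obtain ⟨c, hc, hc1⟩ := exists_smul_sum_sq_eq_one hx0
  obtain ⟨x₀, hx₀, hmin⟩ := hK.exists_isMinOn ⟨c • x, hx.smul c, hc1⟩ hcont.continuousOn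
  refine ⟨x₀, hx₀.1, fun y hy => ?_⟩
  rcases eq_or_ne y 0 with rfl | hy0
  · simpa [tailRatio_zero] using tailRatio_nonneg m x₀
  -- on the unit sphere `tailRatio = 1 / topSqSum - 1`, so it is maximal where `topSqSum` is minimal
  obtain ⟨c', hc', hc'1⟩ := exists_smul_sum_sq_eq_one hy0
  have hpos : 0 < topSqSum m x₀ := topSqSum_pos hm fun h => by simpa [h] using hx₀.2
  have hle : topSqSum m x₀ ≤ topSqSum m (c' • y) := hmin ⟨hy.smul c', hc'1⟩
  show tailRatio m y ≤ tailRatio m x₀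
  rw [← tailRatio_smul m hc' y, tailRatio, tailRatio, hc'1, hx₀.2,
    div_le_div_iff₀ (hpos.trans_le hle) hpos]
  nlinarith

theorem IsDescentDir.tailRatio_le {w x : ι → ℝ} (h : IsDescentDir k w x) (hx : x ≠ 0)
    (hm : 1 ≤ m) {a b : ℝ} (ha : 0 < a) (hwa : ∀ i, a ≤ w i) (hwb : ∀ i, w i ≤ b) :
    tailRatio m x ≤ k * (1 + b / a) := by
  obtain ⟨T, hT, hsum⟩ := h
  obtain ⟨i₀, hi₀⟩ : ∃ i, x i ≠ 0 := Function.ne_iff.mp hx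
  obtain ⟨l, -, hl⟩ := exists_max_image univ (|x ·|) ⟨i₀, mem_univ _⟩
  have hM : ∀ i, |x i| ≤ |x l| := fun i => hl i (mem_univ i)
  have hMpos : 0 < |x l| := (abs_pos.mpr hi₀).trans_le (hM i₀)
  have htop : |x l| ^ 2 ≤ topSqSum m x := by
    simpa [sq_abs] using sum_sq_le_topSqSum x (S := {l}) (by simpa using hm)
  have hba : 0 ≤ b / a := div_nonneg (ha.le.trans ((hwa i₀).trans (hwb i₀))) ha.le
  have hsq : ∑ i, x i ^ 2 ≤ |x l| * ∑ i, |x i| := by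
    rw [mul_sum]
    exact sum_le_sum fun i _ => by
      rw [← sq_abs, sq]
      exact mul_le_mul_of_nonneg_right (hM i) (abs_nonneg _)
  have hTM : ∑ i ∈ T, |x i| ≤ k * |x l| :=
    (sum_le_card_nsmul T _ _ fun i _ => hM i).trans (by rw [nsmul_eq_mul]; gcongr)
  have hcompl : a * ∑ i ∈ Tᶜ, |x i| ≤ b * ∑ i ∈ T, |x i| := by
    simp only [mul_sum]
    calc ∑ i ∈ Tᶜ, a * |x i| ≤ ∑ i ∈ Tᶜ, w i * |x i| :=
          sum_le_sum fun i _ => mul_le_mul_of_nonneg_right (hwa i) (abs_nonneg _)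
      _ ≤ ∑ i ∈ T, w i * |x i| := hsum
      _ ≤ ∑ i ∈ T, b * |x i| :=
          sum_le_sum fun i _ => mul_le_mul_of_nonneg_right (hwb i) (abs_nonneg _)
  have hl1 : ∑ i, |x i| ≤ (1 + b / a) * (k * |x l|) := by
    have : ∑ i ∈ Tᶜ, |x i| ≤ b / a * ∑ i ∈ T, |x i| := by
      rw [div_mul_eq_mul_div, le_div_iff₀ ha]
      linarith
    rw [← sum_compl_add_sum T]
    nlinarith
  rw [tailRatio, div_le_iff₀ ((pow_pos hMpos 2).trans_le htop)]
  calc ∑ i, x i ^ 2 - topSqSum m x ≤ |x l| * ∑ i, |x i| := by linarith [topSqSum_nonneg m x]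
    _ ≤ |x l| * ((1 + b / a) * (k * |x l|)) := mul_le_mul_of_nonneg_left hl1 hMpos.le
    _ = k * (1 + b / a) * |x l| ^ 2 := by ring
    _ ≤ k * (1 + b / a) * topSqSum m x := mul_le_mul_of_nonneg_left htop (by positivity)

theorem bddAbove_tailRatio_image {w : ι → ℝ} (hm : 1 ≤ m) {a b : ℝ} (ha : 0 < a)
    (hwa : ∀ i, a ≤ w i) (hwb : ∀ i, w i ≤ b) :
    BddAbove (tailRatio m '' {x | IsDescentDir k w x ∧ x ≠ 0}) := by
  refine ⟨k * (1 + b / a), ?_⟩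
  rintro _ ⟨x, ⟨hx, hx0⟩, rfl⟩
  exact hx.tailRatio_le hx0 hm ha hwa hwb

end Extremal

section WeightedDescent

variable {ι : Type*} [Fintype ι] [DecidableEq ι] {k : ℕ} {w : ι → ℝ}

theorem exists_perm_threshold (hw₀ : ∀ i, 0 ≤ w i) (hw₁ : ∀ i, w i ≤ 1) (hmax : ∃ i, w i = 1)
    (hne : w ≠ fun _ => 1) {T : Finset ι} (hT : T.Nonempty) {j : ι} (hj : j ∉ T) :
    ∃ (σ : Equiv.Perm ι) (c : ℝ), 0 ≤ c ∧ (∀ i ∈ T, c ≤ w (σ i)) ∧ (∀ i ∉ T, w (σ i) ≤ c) ∧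
      ∃ i ∈ insert j T, w (σ i) ≠ c := by
  obtain ⟨A, hAcard, hA⟩ := exists_isTopSet_card_eq w (card_le_univ T)
  obtain ⟨a, haA, hamin⟩ := exists_min_image A w (card_pos.mp (hAcard ▸ card_pos.mpr hT))
  suffices ∃ σ : Equiv.Perm ι, (∀ i, σ i ∈ A ↔ i ∈ T) ∧ ∃ i ∈ insert j T, w (σ i) ≠ w a by
    obtain ⟨σ, hσ, hi⟩ := this
    exact ⟨σ, w a, hw₀ a, fun i hi => hamin _ ((hσ i).2 hi),
      fun i hi => hA a haA _ (mt (hσ i).1 hi), hi⟩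
  obtain ⟨σ, hσ⟩ := Equiv.Perm.exists_map_finset_eq T A hAcard.symm
  have hσA : ∀ i, σ i ∈ A ↔ i ∈ T := fun i => by simp [← hσ]
  rcases (hw₁ a).lt_or_eq with ha | ha
  · obtain ⟨b, hb⟩ := hmax
    have hbA : b ∈ A := by
      by_contra hbA
      linarith [hA a haA b hbA]
    refine ⟨σ, hσA, σ.symm b, mem_insert_of_mem ((hσA _).1 (by simpa using hbA)), ?_⟩
    simp [hb, ha.ne']
  · -- every weight on `A` is `1`: move a smaller weight to `j`
    obtain ⟨b, hb⟩ : ∃ b, w b ≠ 1 := by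
      by_contra! h
      exact hne (funext h)
    have hbA : b ∉ A := fun hbA => hb (le_antisymm (hw₁ b) (ha ▸ hamin b hbA))
    have hjA : σ j ∉ A := mt (hσA j).1 hj
    refine ⟨σ.trans (Equiv.swap (σ j) b), fun i => ?_, j, mem_insert_self j T, by simp [ha, hb]⟩
    rw [← hσA i, Equiv.trans_apply, Equiv.swap_apply_def]
    split_ifs with h₁ h₂
    · simp [h₁, hbA, hjA]
    · simp [h₂, hbA, hjA]
    · rfl

theorem IsDescentDir.exists_isDescentDir_tailRatio_lt {x : ι → ℝ}
    (hx : IsDescentDir k (fun _ => 1) x) (hρ : 0 < tailRatio (2 * k) x)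
    (hk : 1 ≤ k) (hkι : 2 * k < Fintype.card ι)
    (hw₀ : ∀ i, 0 ≤ w i) (hw₁ : ∀ i, w i ≤ 1) (hmax : ∃ i, w i = 1) (hne : w ≠ fun _ => 1) :
    ∃ x', IsDescentDir k w x' ∧ tailRatio (2 * k) x < tailRatio (2 * k) x' := by
  set y : ι → ℝ := (|x ·|)
  rw [← tailRatio_abs] at hρ ⊢
  obtain ⟨T, hTcard, hT⟩ := exists_isTopSet_card_eq y (by omega : k ≤ Fintype.card ι)
  have hTsum := hx.abs.sum_compl_le_of_isTopSet (by simpa only [abs_abs] using hT) hTcard.ge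
  obtain ⟨j, hjT, hj0⟩ := exists_ne_zero_notMem_of_tailRatio_pos hρ (by omega : T.card ≤ 2 * k)
  have hTpos : ∀ i ∈ T, y i ≠ 0 := fun i hi h0 =>
    hj0 (le_antisymm (h0 ▸ hT i hi j hjT) (abs_nonneg (x j)))
  obtain ⟨σ, c, hc, hcT, hcTc, i, hi, hic⟩ :=
    exists_perm_threshold hw₀ hw₁ hmax hne (card_pos.mp (by omega)) hjT
  have hslack : ∑ i ∈ Tᶜ, (w ∘ σ) i * |y i| < ∑ i ∈ T, (w ∘ σ) i * |y i| :=
    sum_compl_lt_sum_of_threshold (u := w ∘ σ) hc hcT hcTc hTsum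
    ⟨i, (mem_insert.mp hi).elim (· ▸ hj0) (hTpos i), hic⟩
  obtain ⟨i₁, j₁, hij⟩ := hx.exists_abs_ne (fun h => hj0 (by simp [h])) hkι
  obtain ⟨x', hx'y, hρ'⟩ :=
    exists_sum_abs_sub_le_tailRatio_lt (fun i => abs_nonneg (x i)) hρ ⟨i₁, j₁, hij⟩
      (sub_pos.mpr hslack)
  have hx' : IsDescentDir k (w ∘ σ) x' :=
    isDescentDir_of_sum_abs_sub_le (fun i => hw₀ _) (fun i => hw₁ _) hTcard.le (by linarith) hx'y
  exact ⟨x' ∘ σ.symm, hx'.comp_perm, by rwa [tailRatio_comp_perm]⟩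

end WeightedDescent

section Euclidean

variable {n k : ℕ}

theorem sum_sq_eq_norm_sq (z : EuclideanSpace ℝ (Fin n)) : ∑ i, z i ^ 2 = ‖z‖ ^ 2 := by
  simp [EuclideanSpace.norm_sq_eq]

theorem inner_eq_sum_mul (z x : EuclideanSpace ℝ (Fin n)) : ⟪z, x⟫ = ∑ i, z i * x i := by
  simp [PiLp.inner_apply, mul_comm]

theorem norm_coordRestrict_sq (z : EuclideanSpace ℝ (Fin n)) (S : Finset (Fin n)) :
    ‖coordRestrict z S‖ ^ 2 = ∑ i ∈ S, z i ^ 2 := by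
  simp [← sum_sq_eq_norm_sq, coordRestrict, apply_ite (· ^ 2), sum_ite_mem]

theorem wNorm_coordRestrict (w : Fin n → ℝ) (z : EuclideanSpace ℝ (Fin n)) (S : Finset (Fin n)) :
    wNorm w (coordRestrict z S) = ∑ i ∈ S, w i * |z i| := by
  simp [wNorm, coordRestrict, apply_ite, sum_ite_mem]

theorem mem_descentConeSet_wNorm_iff {w : Fin n → ℝ} (hw : ∀ i, 0 ≤ w i)
    (z : EuclideanSpace ℝ (Fin n)) :
    z ∈ descentConeSet (wNorm w) (sparseVecs n k) ↔ IsDescentDir k w z.ofLp := by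
  simp only [descentConeSet, Set.mem_iUnion₂, descentCone, Set.mem_ofPred_eq]
  constructor
  · rintro ⟨x, ⟨T, hT, hx⟩, hxz⟩
    refine ⟨T, hT, ?_⟩
    simp only [wNorm, PiLp.add_apply, ← sum_compl_add_sum T (fun i => w i * |_|)] at hxz
    have h₁ : ∑ i ∈ Tᶜ, w i * |x i + z i| = ∑ i ∈ Tᶜ, w i * |z i| :=
      sum_congr rfl fun i hi => by rw [hx i (mem_compl.mp hi), zero_add]
    have h₂ : ∑ i ∈ Tᶜ, w i * |x i| = 0 :=
      sum_eq_zero fun i hi => by rw [hx i (mem_compl.mp hi), abs_zero, mul_zero]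
    have h₃ : ∑ i ∈ T, w i * |x i| ≤ ∑ i ∈ T, w i * |x i + z i| + ∑ i ∈ T, w i * |z i| := by
      rw [← sum_add_distrib]
      refine sum_le_sum fun i _ => ?_
      rw [← mul_add]
      exact mul_le_mul_of_nonneg_left (by simpa using abs_sub (x i + z i) (z i)) (hw i)
    rw [h₁, h₂] at hxz
    linarith
  · rintro ⟨T, hT, hsum⟩
    refine ⟨-coordRestrict z T, ⟨T, hT, fun i hi => by simp [coordRestrict, hi]⟩, ?_⟩
    have hcompl : -coordRestrict z T + z = coordRestrict z Tᶜ := by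
      ext i
      by_cases hi : i ∈ T <;> simp [coordRestrict, hi]
    have hneg : wNorm w (-coordRestrict z T) = wNorm w (coordRestrict z T) := by
      simp [wNorm]
    rwa [hcompl, hneg, wNorm_coordRestrict, wNorm_coordRestrict]

end Euclidean

theorem one_div_ofReal_one_sub_div {s t : ℝ} (ht : 0 < t) (hts : t ≤ s) :
    1 / ENNReal.ofReal (1 - t / s) = 1 + (ENNReal.ofReal ((s - t) / t))⁻¹ := by
  rcases hts.eq_or_lt with rfl | hlt
  · simp [ht.ne']
  have hs : 0 < s := ht.trans hlt
  rw [one_div, ← ENNReal.ofReal_inv_of_pos (by rw [sub_pos, div_lt_one hs]; exact hlt),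
    ← ENNReal.ofReal_inv_of_pos (div_pos (sub_pos.mpr hlt) ht), ← ENNReal.ofReal_one,
    ← ENNReal.ofReal_add zero_le_one (by positivity)]
  congr 1
  field_simp
  ring

section Conditioning

variable {n k m : ℕ}

theorem norm_sub_starProjection_singleton_sq {E : Type*} [NormedAddCommGroup E]
    [InnerProductSpace ℝ E] (z x : E) :
    ‖x - (ℝ ∙ z).starProjection x‖ ^ 2 = ‖x‖ ^ 2 - ⟪z, x⟫ ^ 2 / ‖z‖ ^ 2 := by
  rcases eq_or_ne z 0 with rfl | hz
  · simp
  have hz' : ‖z‖ ≠ 0 := norm_ne_zero_iff.mpr hz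
  rw [Submodule.starProjection_singleton, norm_sub_sq_real, real_inner_smul_right, norm_smul,
    real_inner_comm]
  simp only [Real.norm_eq_abs, mul_pow, sq_abs, map_pow, RCLike.ofReal_real_eq_id, id]
  field_simp
  ring

theorem smul_mem_sparseVecs {v : EuclideanSpace ℝ (Fin n)} (hv : v ∈ sparseVecs n m) (c : ℝ) :
    c • v ∈ sparseVecs n m := by
  obtain ⟨s, hs, hv0⟩ := hv
  exact ⟨s, hs, fun i hi => by simp [hv0 i hi]⟩

theorem inner_sq_le_topSqSum (z : EuclideanSpace ℝ (Fin n)) {x : EuclideanSpace ℝ (Fin n)}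
    (hx : x ∈ sparseVecs n m) : ⟪z, x⟫ ^ 2 ≤ topSqSum m z.ofLp * ‖x‖ ^ 2 := by
  obtain ⟨s, hs, hx0⟩ := hx
  have hinner : ⟪z, x⟫ = ∑ i ∈ s, z i * x i := by
    rw [inner_eq_sum_mul, sum_subset (subset_univ s) fun i _ hi => by simp [hx0 i hi]]
  calc ⟪z, x⟫ ^ 2 ≤ (∑ i ∈ s, z i ^ 2) * ∑ i ∈ s, x i ^ 2 :=
        hinner ▸ sum_mul_sq_le_sq_mul_sq s _ _
    _ ≤ topSqSum m z.ofLp * ‖x‖ ^ 2 := by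
        rw [← sum_sq_eq_norm_sq]
        exact mul_le_mul (sum_sq_le_topSqSum _ hs)
          (sum_le_sum_of_subset_of_nonneg (subset_univ s) fun _ _ _ => sq_nonneg _)
          (sum_nonneg fun _ _ => sq_nonneg _) (topSqSum_nonneg m _)

theorem exists_sparse_unit_inner_sq_eq_topSqSum (hm : 1 ≤ m) {z : EuclideanSpace ℝ (Fin n)}
    (hz : z ≠ 0) : ∃ x ∈ sparseVecs n m, ‖x‖ = 1 ∧ ⟪z, x⟫ ^ 2 = topSqSum m z.ofLp := by
  obtain ⟨S, hS, htop⟩ := exists_topSqSum_eq m z.ofLp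
  have hv : ‖coordRestrict z S‖ ^ 2 = topSqSum m z.ofLp := by rw [norm_coordRestrict_sq, htop]
  have hv0 : ‖coordRestrict z S‖ ≠ 0 := fun h =>
    (topSqSum_pos hm ((WithLp.ofLp_eq_zero (p := 2)).not.mpr hz)).ne' (by rw [← hv, h]; norm_num)
  have hinner : ⟪z, coordRestrict z S⟫ = ‖coordRestrict z S‖ ^ 2 := by
    rw [norm_coordRestrict_sq, inner_eq_sum_mul]
    simp [coordRestrict, ← sq, sum_ite_mem]
  refine ⟨‖coordRestrict z S‖⁻¹ • coordRestrict z S,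
    smul_mem_sparseVecs ⟨S, hS, fun i hi => by simp [coordRestrict, hi]⟩ _,
    by rw [norm_smul, norm_inv, norm_norm, inv_mul_cancel₀ hv0], ?_⟩
  rw [real_inner_smul_right, hinner, ← hv]
  field_simp

theorem exists_sparse_unit_inner_eq_zero (hm : 2 ≤ m) (hn : 2 ≤ n) {z : EuclideanSpace ℝ (Fin n)}
    (hz : z ≠ 0) : ∃ x ∈ sparseVecs n m, ‖x‖ = 1 ∧ ⟪z, x⟫ = 0 := by
  obtain ⟨i, hi⟩ : ∃ i, z i ≠ 0 := Function.ne_iff.mp ((WithLp.ofLp_eq_zero (p := 2)).not.mpr hz)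
  obtain ⟨j, hji⟩ := Fintype.exists_ne_of_one_lt_card (by rwa [Fintype.card_fin]) i
  set v : EuclideanSpace ℝ (Fin n) := WithLp.toLp 2 (Pi.single i (z j) - Pi.single j (z i))
  have hv : ‖v‖ ≠ 0 := fun h => hi (by simpa [v, hji] using congr_arg (· j) (norm_eq_zero.mp h))
  have hvz : ⟪z, v⟫ = 0 := by
    simp [v, inner_eq_sum_mul, sub_mul, sum_sub_distrib, ite_mul, mul_comm]
  refine ⟨‖v‖⁻¹ • v, smul_mem_sparseVecs ⟨{i, j}, (card_le_two).trans hm, fun l hl => ?_⟩ _,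
    by rw [norm_smul, norm_inv, norm_norm, inv_mul_cancel₀ hv], by rw [real_inner_smul_right, hvz,
      mul_zero]⟩
  simp only [mem_insert, mem_singleton, not_or] at hl
  simp [v, hl.1, hl.2]

theorem gammaRC_sub_starProjection (hk : 1 ≤ k) (hn : 2 ≤ n) {z : EuclideanSpace ℝ (Fin n)}
    (hz : z ≠ 0) :
    gammaRC n k (fun x => x - (ℝ ∙ z).starProjection x) =
      1 + (ENNReal.ofReal (tailRatio (2 * k) z.ofLp))⁻¹ := by
  have htop : 0 < topSqSum (2 * k) z.ofLp :=
    topSqSum_pos (by omega) ((WithLp.ofLp_eq_zero (p := 2)).not.mpr hz)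
  have hsup : ⨆ x ∈ {x | x ∈ sparseVecs n (2 * k) ∧ ‖x‖ = 1},
      ENNReal.ofReal (‖x - (ℝ ∙ z).starProjection x‖ ^ 2) = 1 := by
    refine le_antisymm (iSup₂_le fun x hx => ?_) ?_
    · rw [norm_sub_starProjection_singleton_sq, hx.2, ← ENNReal.ofReal_one]
      exact ENNReal.ofReal_le_ofReal (by simp only [one_pow, sub_le_self_iff]; positivity)
    · obtain ⟨x, hx, hx1, hx0⟩ := exists_sparse_unit_inner_eq_zero (m := 2 * k) (by omega) hn hz
      exact le_iSup₂_of_le x ⟨hx, hx1⟩ (by simp [norm_sub_starProjection_singleton_sq, hx1, hx0])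
  have hinf : ⨅ x ∈ {x | x ∈ sparseVecs n (2 * k) ∧ ‖x‖ = 1},
      ENNReal.ofReal (‖x - (ℝ ∙ z).starProjection x‖ ^ 2) =
        ENNReal.ofReal (1 - topSqSum (2 * k) z.ofLp / ‖z‖ ^ 2) := by
    refine le_antisymm ?_ (le_iInf₂ fun x hx => ENNReal.ofReal_le_ofReal ?_)
    · obtain ⟨x, hx, hx1, hxz⟩ := exists_sparse_unit_inner_sq_eq_topSqSum (m := 2 * k) (by omega) hz
      exact iInf₂_le_of_le x ⟨hx, hx1⟩ (by rw [norm_sub_starProjection_singleton_sq, hx1, hxz,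
        one_pow])
    · have := inner_sq_le_topSqSum z hx.1
      rw [hx.2, one_pow, mul_one] at this
      rw [norm_sub_starProjection_singleton_sq, hx.2, one_pow]
      gcongr
  rw [gammaRC, hsup, hinf, tailRatio, sum_sq_eq_norm_sq]
  exact one_div_ofReal_one_sub_div htop (sum_sq_eq_norm_sq z ▸ topSqSum_le_sum_sq _ _)

end Conditioning

section RIPConstants

variable {n k : ℕ} {w : Fin n → ℝ}

theorem Anec_wNorm_eq (hk : 1 ≤ k) (hn : 2 ≤ n) (hw : ∀ i, 0 ≤ w i) :
    Anec n k (wNorm w) = ⨅ z ∈ {z : EuclideanSpace ℝ (Fin n) | IsDescentDir k w z.ofLp} \ {0},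
      1 + (ENNReal.ofReal (tailRatio (2 * k) z.ofLp))⁻¹ := by
  have hset : descentConeSet (wNorm w) (sparseVecs n k) = {z | IsDescentDir k w z.ofLp} :=
    Set.ext (mem_descentConeSet_wNorm_iff hw)
  simp only [Anec, hset, Submodule.coe_orthogonalProjectionOnto_apply]
  exact iInf_congr fun z => iInf_congr fun hz => gammaRC_sub_starProjection hk hn hz.2

theorem Bsigma_wNorm_eq {T₂ : EuclideanSpace ℝ (Fin n) → Finset (Fin n)}
    (hT₂ : ∀ z, (T₂ z).card = 2 * k ∧ IsTopSet (|z ·|) (T₂ z)) (hw : ∀ i, 0 ≤ w i) :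
    Bsigma n k T₂ (wNorm w) = sSup (tailRatio (2 * k) '' {x | IsDescentDir k w x ∧ x ≠ 0}) := by
  have hratio : ∀ z : EuclideanSpace ℝ (Fin n),
      ‖coordRestrict z (T₂ z)ᶜ‖ ^ 2 / ‖coordRestrict z (T₂ z)‖ ^ 2 = tailRatio (2 * k) z.ofLp :=
    fun z => by rw [norm_coordRestrict_sq, norm_coordRestrict_sq, (hT₂ z).2.tailRatio_eq (hT₂ z).1]
  unfold Bsigma
  congr 1
  ext r
  simp only [hratio, mem_descentConeSet_wNorm_iff hw, Set.mem_sdiff, Set.mem_singleton_iff,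
    Set.mem_image, Set.mem_ofPred_eq]
  constructor
  · rintro ⟨z, ⟨hz, hz0⟩, rfl⟩
    exact ⟨z.ofLp, ⟨hz, by simpa using hz0⟩, rfl⟩
  · rintro ⟨x, ⟨hx, hx0⟩, rfl⟩
    exact ⟨WithLp.toLp 2 x, ⟨hx, by simpa using hx0⟩, rfl⟩

variable {v : Fin n → ℝ} {x₀ x' : Fin n → ℝ}

theorem Anec_wNorm_lt_of_tailRatio_lt (hk : 1 ≤ k) (hn : 2 ≤ n) (hw : ∀ i, 0 ≤ w i)
    (hv : ∀ i, 0 ≤ v i) (hmax : IsMaxOn (tailRatio (2 * k)) {x | IsDescentDir k v x} x₀)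
    (hx' : IsDescentDir k w x') (hlt : tailRatio (2 * k) x₀ < tailRatio (2 * k) x') :
    Anec n k (wNorm w) < Anec n k (wNorm v) := by
  have hρ' : 0 < tailRatio (2 * k) x' := (tailRatio_nonneg _ _).trans_lt hlt
  rw [Anec_wNorm_eq hk hn hw, Anec_wNorm_eq hk hn hv]
  calc _ ≤ 1 + (ENNReal.ofReal (tailRatio (2 * k) x'))⁻¹ :=
        iInf₂_le (WithLp.toLp 2 x') ⟨hx', by simpa using ne_zero_of_tailRatio_pos hρ'⟩
    _ < 1 + (ENNReal.ofReal (tailRatio (2 * k) x₀))⁻¹ :=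
        ENNReal.add_lt_add_left ENNReal.one_ne_top
          (ENNReal.inv_lt_inv.mpr ((ENNReal.ofReal_lt_ofReal_iff hρ').mpr hlt))
    _ ≤ _ := le_iInf₂ fun z hz => by
        gcongr
        exact hmax hz.1

theorem Bsigma_wNorm_lt_of_tailRatio_lt {T₂ : EuclideanSpace ℝ (Fin n) → Finset (Fin n)}
    (hT₂ : ∀ z, (T₂ z).card = 2 * k ∧ IsTopSet (|z ·|) (T₂ z)) (hw : ∀ i, 0 ≤ w i)
    (hv : ∀ i, 0 ≤ v i) (hmax : IsMaxOn (tailRatio (2 * k)) {x | IsDescentDir k v x} x₀)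
    (hx' : IsDescentDir k w x') (hlt : tailRatio (2 * k) x₀ < tailRatio (2 * k) x')
    (hbdd : BddAbove (tailRatio (2 * k) '' {x | IsDescentDir k w x ∧ x ≠ 0})) :
    Bsigma n k T₂ (wNorm v) < Bsigma n k T₂ (wNorm w) := by
  have hx'0 : x' ≠ 0 := ne_zero_of_tailRatio_pos ((tailRatio_nonneg _ _).trans_lt hlt)
  rw [Bsigma_wNorm_eq hT₂ hv, Bsigma_wNorm_eq hT₂ hw]
  calc _ ≤ tailRatio (2 * k) x₀ := by
        refine Real.sSup_le ?_ (tailRatio_nonneg _ _)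
        rintro _ ⟨x, hx, rfl⟩
        exact hmax hx.1
    _ < tailRatio (2 * k) x' := hlt
    _ ≤ _ := le_csSup hbdd ⟨x', ⟨hx', hx'0⟩, rfl⟩

end RIPConstants

/-- the ℓ¹-norm is the unique maximizer of `A_Σ^{RIP,nec}` over weighted
ℓ¹-norms (Theorem 2 of the paper). -/
theorem l1_unique_max_Anec
    (n k : ℕ) (hk : 1 ≤ k) (hn : 2 * k + 1 ≤ n)
    (T₂ : EuclideanSpace ℝ (Fin n) → Finset (Fin n))
    (hT₂ : ∀ z, (T₂ z).card = 2 * k ∧ ∀ i ∈ T₂ z, ∀ j ∉ T₂ z, |z j| ≤ |z i|)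
    (w : Fin n → ℝ) (hpos : ∀ i, 0 < w i) (hle : ∀ i, w i ≤ 1)
    (hmax : ∃ i, w i = 1) (hne : w ≠ fun _ => 1) :
    Anec n k (wNorm w) < Anec n k (wNorm (fun _ => 1))
    ∧ Bsigma n k T₂ (wNorm (fun _ => 1)) < Bsigma n k T₂ (wNorm w) := by
  have hkn : 2 * k < Fintype.card (Fin n) := by simpa using hn
  have hw₀ : ∀ i, 0 ≤ w i := fun i => (hpos i).le
  have h1₀ : ∀ i : Fin n, (0 : ℝ) ≤ 1 := fun _ => zero_le_one
  obtain ⟨x₁, hx₁, hρ₁⟩ := exists_isDescentDir_tailRatio_pos hk (by omega : 1 ≤ 2 * k) hkn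
  obtain ⟨x₀, hx₀, hmax₀⟩ :=
    exists_isMaxOn_tailRatio (by omega : 1 ≤ 2 * k) ⟨x₁, hx₁, ne_zero_of_tailRatio_pos hρ₁⟩
  obtain ⟨x', hx', hlt⟩ := hx₀.exists_isDescentDir_tailRatio_lt
    (hρ₁.trans_le (hmax₀ hx₁)) hk hkn hw₀ hle hmax hne
  obtain ⟨i₀, -, hi₀⟩ := exists_min_image univ w ⟨⟨0, by omega⟩, mem_univ _⟩
  exact ⟨Anec_wNorm_lt_of_tailRatio_lt hk (by omega) hw₀ h1₀ hmax₀ hx' hlt,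
    Bsigma_wNorm_lt_of_tailRatio_lt hT₂ hw₀ h1₀ hmax₀ hx' hlt
      (bddAbove_tailRatio_image (by omega) (hpos i₀) (fun i => hi₀ i (mem_univ i)) hle)⟩

end
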